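/- The disagreement probabilities of the noisy voter model satisfy the master equation: for every vertex x ∈ V(G) and every t ≥ 0, d/dt P(Z_t(x)=1) = −(2δ/(2δ+1))·P(Z_t(x)=1) − (1/(2δ+1))·(1/d(x))·Σ_{u ~ x} P(Z_t(x)=1, Z_t(u)=0) + (1/(2δ+1))·(1/d(x))·Σ_{u ~ x} P(Z_t(x)=0, Z_t(u)=1). -/

import Mathlib

open Finset

/-- Flip rate of the disagreement chain of the noisy voter model at vertex `v` in
configuration `η`: `(2δ/(2δ+1))·1{η(v)=1} + (1/(2δ+1))·(1/d(v))·#{u ~ v : η(u) ≠ η(v)}`. -/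
noncomputable def dzRate {V : Type*} [Fintype V] (G : SimpleGraph V) [DecidableRel G.Adj]
    (δ : ℝ) (v : V) (η : V → Bool) : ℝ :=
  (2 * δ / (2 * δ + 1)) * (if η v = true then 1 else 0) +
    (1 / (2 * δ + 1)) * (1 / (G.degree v : ℝ)) *
      ((Finset.univ.filter fun u => G.Adj v u ∧ η u ≠ η v).card : ℝ)

/-- The rate matrix of the disagreement chain: single-spin flips occur at rate `dzRate`,
transitions changing two or more spins have rate `0`, and diagonal entries make rows sum to `0`. -/
noncomputable def dzQ {V : Type*} [Fintype V] [DecidableEq V] (G : SimpleGraph V)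
    [DecidableRel G.Adj] (δ : ℝ) : Matrix (V → Bool) (V → Bool) ℝ := fun η η' =>
  if η = η' then -∑ v, dzRate G δ v η
  else if (Finset.univ.filter fun v => η v ≠ η' v).card = 1 then
    ∑ v ∈ Finset.univ.filter (fun v => η v ≠ η' v), dzRate G δ v η
  else 0

/-- `P(Z_t(v) = 1)`: the probability that the disagreement chain started from the all-ones
configuration has a disagreement (spin `1`) at vertex `v` at time `t`. -/
noncomputable def probDisagree {V : Type*} [Fintype V] [DecidableEq V] (G : SimpleGraph V)
    [DecidableRel G.Adj] (δ : ℝ) (t : ℝ) (v : V) : ℝ :=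
  ∑ η ∈ Finset.univ.filter (fun η : V → Bool => η v = true),
    NormedSpace.exp (t • dzQ G δ) (fun _ => true) η

/-- `P(Z_t(x) = a, Z_t(u) = b)`: the joint probability that the disagreement chain started
from the all-ones configuration takes value `a` at `x` and `b` at `u` at time `t`. -/
noncomputable def probDisagree₂ {V : Type*} [Fintype V] [DecidableEq V] (G : SimpleGraph V)
    [DecidableRel G.Adj] (δ : ℝ) (t : ℝ) (x : V) (a : Bool) (u : V) (b : Bool) : ℝ :=
  ∑ η ∈ Finset.univ.filter (fun η : V → Bool => η x = a ∧ η u = b),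
    NormedSpace.exp (t • dzQ G δ) (fun _ => true) η

/-!
Kolmogorov's forward equation gives `d/dt (p_t f)(1̄) = (p_t (Q f))(1̄)`, and `Q` acts on
observables as the generator `(Q f)(κ) = Σ_v c_v(κ) (f(κ^v) - f(κ))`. For `f = 1{η(x) = 1}`
only the flip at `x` changes `f`, so `Q f = ∓ c_x` according as `κ(x) = 1` or `0`; splitting
the rate `c_x` into its self-flip part and its neighbour count gives the three terms.
-/

open Matrix

theorem Matrix.hasDerivAt_exp_smul_mulVec_apply {n : Type*} [Fintype n] [DecidableEq n]
    (A : Matrix n n ℝ) (f : n → ℝ) (i : n) (t : ℝ) :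
    HasDerivAt (fun s : ℝ => (NormedSpace.exp (s • A) *ᵥ f) i)
      ((NormedSpace.exp (t • A) *ᵥ (A *ᵥ f)) i) t := by
  -- `exp` does not depend on the norm; any normed-algebra structure on matrices will do.
  let : NormedRing (Matrix n n ℝ) := Matrix.linftyOpNormedRing
  let : NormedAlgebra ℝ (Matrix n n ℝ) := Matrix.linftyOpNormedAlgebra
  let evalAt : Matrix n n ℝ →L[ℝ] ℝ :=
    LinearMap.toContinuousLinearMap ((LinearMap.proj i).comp ((mulVecBilin ℝ ℝ).flip f))
  rw [mulVec_mulVec]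
  exact evalAt.hasFDerivAt.comp_hasDerivAt t (hasDerivAt_exp_smul_const A t)

theorem Matrix.sum_filter_apply_eq_mulVec {m n R : Type*} [Fintype n] [NonAssocSemiring R]
    (M : Matrix m n R) (p : n → Prop) [DecidablePred p] (i : m) :
    ∑ j ∈ univ.filter p, M i j = (M *ᵥ fun j => if p j then 1 else 0) i := by
  simp [mulVec, dotProduct, sum_filter]

theorem Finset.sum_ite_eq_singleton {α M : Type*} [Fintype α] [DecidableEq α] [AddCommMonoid M]
    (s : Finset α) (g : α → M) :
    ∑ a, (if s = {a} then g a else 0) = if #s = 1 then ∑ a ∈ s, g a else 0 := by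
  split_ifs with hs
  · obtain ⟨a, rfl⟩ := card_eq_one.mp hs
    simp [Finset.singleton_inj]
  · exact sum_eq_zero fun a _ => if_neg fun h : s = {a} => hs (h ▸ card_singleton a)

section DisagreementChain

variable {V : Type*} [Fintype V] [DecidableEq V]

theorem eq_update_not_iff_filter_ne_eq_singleton {κ η : V → Bool} {v : V} :
    η = Function.update κ v (!κ v) ↔ univ.filter (fun w => κ w ≠ η w) = {v} := by
  constructor
  · rintro rfl
    ext w
    by_cases h : w = v <;> simp [Function.update_apply, h]
  · intro h
    funext w
    have hw : κ w ≠ η w ↔ w = v := by simpa using Finset.ext_iff.mp h w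
    by_cases hwv : w = v
    · subst hwv
      cases hκ : κ w <;> cases hη : η w <;> simp_all
    · simp_all

variable (G : SimpleGraph V) [DecidableRel G.Adj] (δ : ℝ)

theorem dzQ_apply_eq_sum (κ η : V → Bool) :
    dzQ G δ κ η = ∑ v, dzRate G δ v κ *
      ((if η = Function.update κ v (!κ v) then 1 else 0) - if η = κ then 1 else 0) := by
  rcases eq_or_ne η κ with rfl | hne
  · have hflip : ∀ v, η ≠ Function.update η v (!η v) := fun v h => by
      simpa using congrFun h v
    simp [dzQ, hflip]
  · simp only [eq_update_not_iff_filter_ne_eq_singleton, if_neg hne, sub_zero, mul_ite, mul_one,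
      mul_zero]
    rw [dzQ, if_neg hne.symm, Finset.sum_ite_eq_singleton]

theorem dzQ_mulVec_apply (f : (V → Bool) → ℝ) (κ : V → Bool) :
    (dzQ G δ *ᵥ f) κ = ∑ v, dzRate G δ v κ * (f (Function.update κ v (!κ v)) - f κ) := by
  simp only [mulVec, dotProduct, dzQ_apply_eq_sum, sum_mul]
  rw [sum_comm]
  refine sum_congr rfl fun v _ => ?_
  simp [mul_sub, sub_mul, ite_mul, sum_sub_distrib]

theorem dzQ_mulVec_indicator_eq_true (x : V) :
    dzQ G δ *ᵥ (fun η => if η x = true then 1 else 0) =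
      -(2 * δ / (2 * δ + 1)) • (fun η => if η x = true then 1 else 0)
      - (1 / (2 * δ + 1) * (1 / (G.degree x : ℝ))) •
        ∑ u ∈ G.neighborFinset x, (fun η => if η x = true ∧ η u = false then 1 else 0)
      + (1 / (2 * δ + 1) * (1 / (G.degree x : ℝ))) •
        ∑ u ∈ G.neighborFinset x, (fun η => if η x = false ∧ η u = true then 1 else 0) := by
  funext κ
  rw [dzQ_mulVec_apply, sum_eq_single x]
  · cases hκ : κ x <;>
      simp [hκ, dzRate, Finset.sum_apply, SimpleGraph.neighborFinset_eq_filter, filter_filter,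
        sub_eq_add_neg, add_comm]
  · intro v _ hv
    simp [Ne.symm hv]
  · simp

end DisagreementChain

theorem disagreement_master_equation_general
    {V : Type*} [Fintype V] [DecidableEq V] (δ : ℝ)
    (G : SimpleGraph V) [DecidableRel G.Adj]
    (x : V) (t : ℝ) :
    HasDerivAt (fun s => probDisagree G δ s x)
      (-(2 * δ / (2 * δ + 1)) * probDisagree G δ t x
        - (1 / (2 * δ + 1)) * (1 / (G.degree x : ℝ)) *
            ∑ u ∈ G.neighborFinset x, probDisagree₂ G δ t x true u false
        + (1 / (2 * δ + 1)) * (1 / (G.degree x : ℝ)) *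
            ∑ u ∈ G.neighborFinset x, probDisagree₂ G δ t x false u true) t := by
  simp only [probDisagree, probDisagree₂, sum_filter_apply_eq_mulVec]
  convert hasDerivAt_exp_smul_mulVec_apply (dzQ G δ) _ _ t using 1
  rw [dzQ_mulVec_indicator_eq_true]
  simp [mulVec_add, mulVec_sub, mulVec_neg, mulVec_smul, mulVec_sum, Finset.sum_apply]

/-- The master equation for the disagreement probabilities of the noisy voter model:
`d/dt P(Z_t(x)=1) = −(2δ/(2δ+1))·P(Z_t(x)=1)
  − (1/(2δ+1))·(1/d(x))·Σ_{u ~ x} P(Z_t(x)=1, Z_t(u)=0)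
  + (1/(2δ+1))·(1/d(x))·Σ_{u ~ x} P(Z_t(x)=0, Z_t(u)=1)`. -/
theorem disagreement_master_equation
    {V : Type*} [Fintype V] [DecidableEq V] (δ : ℝ) (hδ : 0 < δ)
    (G : SimpleGraph V) [DecidableRel G.Adj] (hdeg : ∀ v, 1 ≤ G.degree v)
    (x : V) (t : ℝ) (ht : 0 ≤ t) :
    HasDerivAt (fun s => probDisagree G δ s x)
      (-(2 * δ / (2 * δ + 1)) * probDisagree G δ t x
        - (1 / (2 * δ + 1)) * (1 / (G.degree x : ℝ)) *
            ∑ u ∈ G.neighborFinset x, probDisagree₂ G δ t x true u false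
        + (1 / (2 * δ + 1)) * (1 / (G.degree x : ℝ)) *
            ∑ u ∈ G.neighborFinset x, probDisagree₂ G δ t x false u true) t :=
  disagreement_master_equation_general δ G x t
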